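/- Let X ⊂ ℝ be a finite set of prizes and R a risk-consistent linear order on Δ(X). For every r ∈ Δ({b,w}) and every p ∈ Δ(X) with r R p and p ≠ r, either p first-order stochastically dominates r or r first-order stochastically dominates p. -/

import Mathlib

open scoped BigOperators

noncomputable section

/-- Lotteries over the finite prize set `X ⊂ ℝ`, as a subset of Euclidean space `ℝ^X`. -/
abbrev Lot (X : Finset ℝ) : Type :=
  {p : EuclideanSpace ℝ ↥X // (∀ x, 0 ≤ p x) ∧ ∑ x, p x = 1}

variable {X : Finset ℝ}

noncomputable instance : DecidableEq (Lot X) := Classical.decEq _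

/-- The degenerate distribution on prize `x`, as a vector. -/
def degv (x : ↥X) : EuclideanSpace ℝ ↥X := WithLp.toLp 2 (fun y => if y = x then (1 : ℝ) else 0)

/-- The degenerate lottery `δ_x`. -/
def deg (x : ↥X) : Lot X :=
  ⟨degv x, fun y => by by_cases h : y = x <;> simp [degv, h], by simp [degv]⟩

/-- The mixture `αp + (1-α)q`, as a vector. -/
def mixv (α : ℝ) (p q : Lot X) : EuclideanSpace ℝ ↥X := α • p.1 + (1 - α) • q.1

/-- The best prize `b = max X` as an element of `X`. -/
def bIdx (hX : X.Nonempty) : ↥X := ⟨X.max' hX, X.max'_mem hX⟩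

/-- The worst prize `w = min X` as an element of `X`. -/
def wIdx (hX : X.Nonempty) : ↥X := ⟨X.min' hX, X.min'_mem hX⟩

/-- `p` first-order stochastically dominates `q`. -/
def FOSDom (p q : Lot X) : Prop :=
  ∀ z ∈ X, (∑ x : ↥X, if z ≤ (x : ℝ) then q.1 x else 0) ≤
    ∑ x : ↥X, if z ≤ (x : ℝ) then p.1 x else 0

/-- `p` is a mean-preserving spread of `q`. -/
def MPS (p q : Lot X) : Prop :=
  p ≠ q ∧ (∑ x : ↥X, p.1 x * (x : ℝ)) = (∑ x : ↥X, q.1 x * (x : ℝ)) ∧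
  ∀ z : ℝ, (∑ x : ↥X, q.1 x * max (z - (x : ℝ)) 0) ≤
    ∑ x : ↥X, p.1 x * max (z - (x : ℝ)) 0

/-- `p` is an extreme spread of `q`. -/
def ES (hX : X.Nonempty) (p q : Lot X) : Prop :=
  ∃ β α : ℝ, 0 ≤ β ∧ β < 1 ∧ q.1 (bIdx hX) < α ∧ α < 1 - q.1 (wIdx hX) ∧
    p.1 = β • q.1 + (1 - β) • (α • degv (bIdx hX) + (1 - α) • degv (wIdx hX))

/-- A reference order is risk-consistent if safer lotteries rank higher. -/
def RiskConsistent (hX : X.Nonempty) (R : Lot X → Lot X → Prop) : Prop :=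
  ∀ p q : Lot X, (MPS p q ∨ ES hX p q) → R q p

/-- `p` is a mixture of `δ_b` and `δ_w`, i.e. `p ∈ Δ({b,w})`. -/
def inBW (hX : X.Nonempty) (p : Lot X) : Prop :=
  ∀ x : ↥X, x ≠ bIdx hX → x ≠ wIdx hX → p.1 x = 0

/-- Expected utility of lottery `p` under Bernoulli utility `u`. -/
def EV (p : Lot X) (u : ↥X → ℝ) : ℝ := ∑ x : ↥X, p.1 x * u x

/-- `c` satisfies WARP over a collection `S` of choice problems. -/
def WARPover (c : Finset (Lot X) → Finset (Lot X)) (S : Set (Finset (Lot X))) : Prop :=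
  ∀ A ∈ S, ∀ B ∈ S, B ⊆ A → (c A ∩ B).Nonempty → c A ∩ B = c B

/-- `c` satisfies Independence over a collection `S` of choice problems. -/
def IndepOver (c : Finset (Lot X) → Finset (Lot X)) (S : Set (Finset (Lot X))) : Prop :=
  ∀ A ∈ S, ∀ B ∈ S, ∀ α : ℝ, 0 < α → α < 1 →
    ∀ p q s pas qas : Lot X, pas.1 = mixv α p s → qas.1 = mixv α q s →
      (p ∈ c A → q ∈ A → qas ∈ c B → pas ∈ B → pas ∈ c B) ∧
      (pas ∈ c A → qas ∈ A → q ∈ c B → p ∈ B → p ∈ c B)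

/-- Continuity: `c` has a closed graph w.r.t. the Hausdorff distance. -/
def ClosedGraphC (c : Finset (Lot X) → Finset (Lot X)) : Prop :=
  ∀ (x : Lot X) (xs : ℕ → Lot X) (A : Finset (Lot X)) (As : ℕ → Finset (Lot X)),
    A.Nonempty → (∀ n, (As n).Nonempty) →
    Filter.Tendsto xs Filter.atTop (nhds x) →
    Filter.Tendsto (fun n => Metric.hausdorffDist ((As n : Set (Lot X))) (A : Set (Lot X)))
      Filter.atTop (nhds 0) →
    (∀ n, xs n ∈ c (As n)) → x ∈ c A

/-- `c` admits an AREU representation with data `(R, u, r)`. -/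
def IsAREU (hX : X.Nonempty) (c : Finset (Lot X) → Finset (Lot X))
    (R : Lot X → Lot X → Prop) (u : Lot X → ↥X → ℝ) (r : Finset (Lot X) → Lot X) : Prop :=
  IsLinearOrder (Lot X) R ∧ RiskConsistent hX R ∧
  (∀ p : Lot X, ∀ x y : ↥X, (x : ℝ) < (y : ℝ) → u p x < u p y) ∧
  (∀ (p : Lot X) (x : ↥X), u p x ∈ Set.Icc (0 : ℝ) 1) ∧
  (∀ A : Finset (Lot X), A.Nonempty → r A ∈ A ∧ ∀ p ∈ A, R (r A) p) ∧
  (∀ A : Finset (Lot X), A.Nonempty → ∀ p : Lot X,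
    p ∈ c A ↔ p ∈ A ∧ ∀ q ∈ A, EV q (u (r A)) ≤ EV p (u (r A))) ∧
  (∀ p q : Lot X, R q p → ∃ f : ℝ → ℝ, ConcaveOn ℝ (Set.Icc 0 1) f ∧
    (∀ t ∈ Set.Icc (0 : ℝ) 1, f t ∈ Set.Icc (0 : ℝ) 1) ∧ ∀ x : ↥X, u q x = f (u p x)) ∧
  ClosedGraphC c

/-! A lottery `r` on `{b, w}` has upper tail `r b` on `(w, b]`, so if `r b ≤ p b` then `p`
dominates `r`, and if `r w ≤ p w` then `r` dominates `p`. In the remaining case `p` puts less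
mass than `r` on both `b` and `w`, so `r` is an extreme spread of `p` (take `β = 0`, `α = r b`);
risk consistency then gives `p R r`, and antisymmetry forces `p = r`. -/

def upperTail (p : Lot X) (z : ℝ) : ℝ := ∑ x : ↥X, if z ≤ (x : ℝ) then p.1 x else 0

theorem fosDom_iff {p q : Lot X} : FOSDom p q ↔ ∀ z ∈ X, upperTail q z ≤ upperTail p z :=
  Iff.rfl

theorem upperTail_eq_one (p : Lot X) {z : ℝ} (hz : ∀ x : ↥X, z ≤ x) : upperTail p z = 1 :=
  (Finset.sum_congr rfl fun x _ => if_pos (hz x)).trans p.2.2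

theorem apply_le_upperTail (p : Lot X) {z : ℝ} {x : ↥X} (hx : z ≤ x) :
    p.1 x ≤ upperTail p z := by
  have hnonneg : ∀ y : ↥X, y ∈ Finset.univ → 0 ≤ if z ≤ (y : ℝ) then p.1 y else 0 := fun y _ => by
    split_ifs
    exacts [p.2.1 y, le_rfl]
  have hsingle := Finset.single_le_sum hnonneg (Finset.mem_univ x)
  rwa [if_pos hx] at hsingle

theorem upperTail_le_one_sub (p : Lot X) {z : ℝ} {x : ↥X} (hx : (x : ℝ) < z) :
    upperTail p z ≤ 1 - p.1 x := by
  have hpointwise : ∀ y : ↥X,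
      ((if z ≤ (y : ℝ) then p.1 y else 0) + if y = x then p.1 y else 0) ≤ p.1 y := fun y => by
    by_cases hyx : y = x
    · subst hyx
      simp [not_le.mpr hx]
    · split_ifs <;> simp [p.2.1 y]
  have hsum := Finset.sum_le_sum fun y (_ : y ∈ Finset.univ) => hpointwise y
  rw [Finset.sum_add_distrib, Finset.sum_ite_eq', p.2.2] at hsum
  simp only [Finset.mem_univ, if_true] at hsum
  rw [upperTail]
  linarith

theorem wIdx_lt_bIdx (hX : X.Nonempty) (hcard : 2 ≤ X.card) :
    (wIdx hX : ℝ) < bIdx hX :=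
  X.min'_lt_max'_of_card hcard

theorem fosDom_of_upperTail_le_of_wIdx_lt (hX : X.Nonempty) {p q : Lot X}
    (h : ∀ z : ℝ, (wIdx hX : ℝ) < z → z ≤ bIdx hX → upperTail q z ≤ upperTail p z) :
    FOSDom p q := by
  refine fosDom_iff.mpr fun z hz => ?_
  rcases le_or_gt z (wIdx hX) with hzw | hwz
  · have hzx : ∀ x : ↥X, z ≤ x := fun x => hzw.trans (X.min'_le x x.2)
    rw [upperTail_eq_one q hzx, upperTail_eq_one p hzx]
  · exact h z hwz (X.le_max' z hz)

section BestWorst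

variable {hX : X.Nonempty} {r p : Lot X}

theorem inBW.apply_bIdx_add_apply_wIdx (hr : inBW hX r) (hwb : (wIdx hX : ℝ) < bIdx hX) :
    r.1 (bIdx hX) + r.1 (wIdx hX) = 1 := by
  rw [← Fintype.sum_eq_add _ _ (fun h => hwb.ne' (congrArg Subtype.val h))
    fun x hx => hr x hx.1 hx.2]
  exact r.2.2

theorem inBW.eq_mix (hr : inBW hX r) (hwb : (wIdx hX : ℝ) < bIdx hX) :
    r.1 = r.1 (bIdx hX) • degv (bIdx hX) + (1 - r.1 (bIdx hX)) • degv (wIdx hX) := by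
  have hsum := hr.apply_bIdx_add_apply_wIdx hwb
  have hbw : bIdx hX ≠ wIdx hX := fun h => hwb.ne' (congrArg Subtype.val h)
  ext x
  simp only [PiLp.add_apply, PiLp.smul_apply, degv, smul_eq_mul]
  by_cases hxb : x = bIdx hX
  · simp [hxb, hbw]
  · by_cases hxw : x = wIdx hX
    · simp only [hxw, hbw.symm, if_false, if_true]
      linarith
    · simp [hxb, hxw, hr x hxb hxw]

theorem inBW.upperTail_eq (hr : inBW hX r) (hwb : (wIdx hX : ℝ) < bIdx hX) {z : ℝ}
    (hwz : (wIdx hX : ℝ) < z) (hzb : z ≤ bIdx hX) : upperTail r z = r.1 (bIdx hX) := by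
  refine le_antisymm ?_ (apply_le_upperTail r hzb)
  linarith [upperTail_le_one_sub r hwz, hr.apply_bIdx_add_apply_wIdx hwb]

theorem inBW.fosDom_of_apply_bIdx_le (hr : inBW hX r) (hwb : (wIdx hX : ℝ) < bIdx hX)
    (h : r.1 (bIdx hX) ≤ p.1 (bIdx hX)) : FOSDom p r := by
  refine fosDom_of_upperTail_le_of_wIdx_lt hX fun z hwz hzb => ?_
  calc upperTail r z = r.1 (bIdx hX) := hr.upperTail_eq hwb hwz hzb
    _ ≤ p.1 (bIdx hX) := h
    _ ≤ upperTail p z := apply_le_upperTail p hzb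

theorem inBW.fosDom_of_apply_wIdx_le (hr : inBW hX r) (hwb : (wIdx hX : ℝ) < bIdx hX)
    (h : r.1 (wIdx hX) ≤ p.1 (wIdx hX)) : FOSDom r p := by
  refine fosDom_of_upperTail_le_of_wIdx_lt hX fun z hwz hzb => ?_
  calc upperTail p z ≤ 1 - p.1 (wIdx hX) := upperTail_le_one_sub p hwz
    _ ≤ 1 - r.1 (wIdx hX) := by linarith
    _ = r.1 (bIdx hX) := by linarith [hr.apply_bIdx_add_apply_wIdx hwb]
    _ = upperTail r z := (hr.upperTail_eq hwb hwz hzb).symm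

theorem inBW.es_of_apply_lt (hr : inBW hX r) (hwb : (wIdx hX : ℝ) < bIdx hX)
    (hb : p.1 (bIdx hX) < r.1 (bIdx hX)) (hw : p.1 (wIdx hX) < r.1 (wIdx hX)) :
    ES hX r p :=
  ⟨0, r.1 (bIdx hX), le_rfl, one_pos, hb, by linarith [hr.apply_bIdx_add_apply_wIdx hwb],
    by simpa using hr.eq_mix hwb⟩

end BestWorst

/-- Lemma 5: for a risk-consistent linear order `R`, any `r ∈ Δ({b,w})`
and `p ≠ r` with `r R p` are comparable via first-order stochastic dominance. -/
theorem stmt15 (X : Finset ℝ) (hX : X.Nonempty) (hcard : 2 ≤ X.card)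
    (R : Lot X → Lot X → Prop) (hlin : IsLinearOrder (Lot X) R)
    (hrc : RiskConsistent hX R) :
    ∀ r p : Lot X, inBW hX r → R r p → p ≠ r →
      FOSDom p r ∨ FOSDom r p := by
  intro r p hr hRrp hne
  have hwb := wIdx_lt_bIdx hX hcard
  by_cases hb : r.1 (bIdx hX) ≤ p.1 (bIdx hX)
  · exact Or.inl (hr.fosDom_of_apply_bIdx_le hwb hb)
  by_cases hw : r.1 (wIdx hX) ≤ p.1 (wIdx hX)
  · exact Or.inr (hr.fosDom_of_apply_wIdx_le hwb hw)
  have hRpr : R p r := hrc r p (Or.inr (hr.es_of_apply_lt hwb (not_le.mp hb) (not_le.mp hw)))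
  exact absurd (hlin.antisymm p r hRpr hRrp) hne

end
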